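/- arXiv:1507.01198 — 2 statements merged into one kernel-verified Lean document; each statement's English description precedes it below -/
import Mathlib

section
/- Let X^t be a flow without fixed points on a compact metric space M. If X^t is cw-expansive, then for every η > 0 there is δ > 0 such that whenever A ⊆ M is a continuum and α ∈ H(A) satisfies diam(X^t_α(A)) < δ for all t ∈ ℝ, the set A is a segment of the orbit of x_α contained in the ball B_η(x_α); conversely, if this 'orbit-segment' conclusion holds for every η > 0 (with some δ > 0), then X^t is cw-expansive. -/
def IsFlow {M : Type*} [TopologicalSpace M] (X : ℝ → M → M) : Prop :=
  Continuous (fun p : ℝ × M => X p.1 p.2) ∧ (∀ x, X 0 x = x) ∧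
    ∀ s t (x : M), X (s + t) x = X s (X t x)

def CwExpansive {M : Type*} [MetricSpace M] (X : ℝ → M → M) : Prop :=
  ∀ ε > (0 : ℝ), ∃ δ > (0 : ℝ), ∀ (A : Set M) (α : M → ℝ ≃ₜ ℝ) (xα : M),
    IsCompact A → IsConnected A → xα ∈ A →
    (∀ t : ℝ, α xα t = t) → (∀ a ∈ A, α a 0 = 0) →
    (∀ t : ℝ, ContinuousOn (fun a => α a t) A) →
    (∀ t : ℝ, Metric.diam ((fun a => X (α a t) a) '' A) < δ) →
    A ⊆ (fun s => X s xα) '' Set.Ioo (-ε) ε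

set_option linter.unusedSectionVars false

section Aux

variable {M : Type*} [MetricSpace M] [CompactSpace M] {X : ℝ → M → M}

lemma per_int (hflow : IsFlow X) {p : ℝ} {y : M} (hper : X p y = y) :
    ∀ k : ℤ, X (p * k) y = y := by
  have hneg : X (-p) y = y := by
    have := hflow.2.2 (-p) p y
    rw [hper, neg_add_cancel, hflow.2.1] at this
    exact this.symm
  intro k
  induction k using Int.induction_on with
  | zero => simpa using hflow.2.1 y
  | succ k ih =>
    have h1 : (p * (((k : ℤ) + 1 : ℤ) : ℝ)) = p + p * ((k : ℤ) : ℝ) := by push_cast; ring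
    rw [h1, hflow.2.2, ih, hper]
  | pred k ih =>
    have h1 : (p * ((-(k : ℤ) - 1 : ℤ) : ℝ)) = -p + p * ((-(k : ℤ) : ℤ) : ℝ) := by
      push_cast; ring
    rw [h1, hflow.2.2, ih, hneg]

lemma per_reduce (hflow : IsFlow X) {p : ℝ} {y : M} (hp : 0 < p) (hper : X p y = y)
    (t : ℝ) : ∃ r, 0 ≤ r ∧ r < p ∧ X t y = X r y := by
  refine ⟨p * Int.fract (t / p), mul_nonneg hp.le (Int.fract_nonneg _), ?_, ?_⟩
  · have := Int.fract_lt_one (t / p)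
    nlinarith
  · have ht : t = p * Int.fract (t / p) + p * ⌊t / p⌋ := by
      have : Int.fract (t / p) = t / p - ⌊t / p⌋ := rfl
      field_simp [this]
      rw [this, sub_add_cancel]
      field_simp
    calc X t y = X (p * Int.fract (t / p) + p * ⌊t / p⌋) y := by rw [← ht]
    _ = X (p * Int.fract (t / p)) (X (p * ⌊t / p⌋) y) := hflow.2.2 _ _ _
    _ = X (p * Int.fract (t / p)) y := by rw [per_int hflow hper]

/-- L1: uniform continuity at time 0. -/
lemma unif_small (hflow : IsFlow X) {η : ℝ} (hη : 0 < η) :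
    ∃ ε > (0 : ℝ), ∀ (x : M) (s : ℝ), |s| ≤ ε → dist (X s x) x < η := by
  by_contra h
  push_neg at h
  have hch : ∀ n : ℕ, ∃ (x : M) (s : ℝ), |s| ≤ 1 / (n + 1) ∧ η ≤ dist (X s x) x := by
    intro n
    obtain ⟨x, s, hs, hd⟩ := h (1 / (n + 1)) (by positivity)
    exact ⟨x, s, hs, hd⟩
  choose x s hs hd using hch
  obtain ⟨a, -, φ, hφ, ha⟩ := isCompact_univ.tendsto_subseq (x := x) (fun n => Set.mem_univ _)
  have hs0 : Filter.Tendsto (s ∘ φ) Filter.atTop (nhds 0) := by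
    apply squeeze_zero_norm (fun n => hs (φ n))
    exact (tendsto_one_div_add_atTop_nhds_zero_nat).comp hφ.tendsto_atTop
  have hprod : Filter.Tendsto (fun n => ((s ∘ φ) n, (x ∘ φ) n)) Filter.atTop (nhds (0, a)) :=
    hs0.prodMk_nhds ha
  have hdist : Filter.Tendsto (fun n => dist (X ((s ∘ φ) n) ((x ∘ φ) n)) ((x ∘ φ) n))
      Filter.atTop (nhds (dist (X 0 a) a)) := by
    have hc : Continuous (fun q : ℝ × M => dist (X q.1 q.2) q.2) :=
      (hflow.1).dist continuous_snd
    exact (hc.tendsto (0, a)).comp hprod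
  rw [hflow.2.1] at hdist
  simp only [dist_self] at hdist
  have : η ≤ (0 : ℝ) := ge_of_tendsto' hdist (fun n => hd (φ n))
  linarith

/-- L2: uniform expansion constant. -/
lemma unif_expand (hflow : IsFlow X) (hnofix : ∀ x : M, ∃ t : ℝ, X t x ≠ x)
    {ε : ℝ} (hε : 0 < ε) :
    ∃ c > (0 : ℝ), ∀ x : M, ∃ t ∈ Set.Icc (0 : ℝ) ε, c ≤ dist (X t x) x := by
  by_contra h
  push_neg at h
  have hch : ∀ n : ℕ, ∃ x : M, ∀ t ∈ Set.Icc (0 : ℝ) ε, dist (X t x) x < 1 / (n + 1) := by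
    intro n
    obtain ⟨x, hx⟩ := h (1 / (n + 1)) (by positivity)
    exact ⟨x, fun t ht => hx t ht⟩
  choose x hx using hch
  obtain ⟨a, -, φ, hφ, ha⟩ := isCompact_univ.tendsto_subseq (x := x) (fun n => Set.mem_univ _)
  have hfix : ∀ t ∈ Set.Icc (0 : ℝ) ε, X t a = a := by
    intro t ht
    have hdist : Filter.Tendsto (fun n => dist (X t ((x ∘ φ) n)) ((x ∘ φ) n))
        Filter.atTop (nhds (dist (X t a) a)) := by
      have hc : Continuous (fun m : M => dist (X t m) m) :=
        ((hflow.1).comp (continuous_const.prodMk continuous_id)).dist continuous_id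
      exact (hc.tendsto a).comp ha
    have hle : dist (X t a) a ≤ 0 := by
      refine le_of_tendsto_of_tendsto' hdist tendsto_one_div_add_atTop_nhds_zero_nat
        (fun n => ?_)
      have h1 := (hx (φ n) t ht).le
      have h2 : (1 : ℝ) / (φ n + 1) ≤ 1 / (n + 1) := by
        apply one_div_le_one_div_of_le (by positivity)
        have h3 : n ≤ φ n := hφ.le_apply
        exact_mod_cast Nat.add_le_add_right h3 1
      exact h1.trans h2
    exact dist_le_zero.mp hle
  have hperε : X ε a = a := hfix ε ⟨le_of_lt hε, le_refl ε⟩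
  obtain ⟨t, hta⟩ := hnofix a
  obtain ⟨r, hr0, hrε, hrt⟩ := per_reduce hflow hε hperε t
  exact hta (by rw [hrt]; exact hfix r ⟨hr0, le_of_lt hrε⟩)

/-- L3: no small periods. -/
lemma no_small_period (hflow : IsFlow X) (hnofix : ∀ x : M, ∃ t : ℝ, X t x ≠ x) :
    ∃ T > (0 : ℝ), ∀ (x : M) (p : ℝ), 0 < p → p ≤ T → X p x ≠ x := by
  obtain ⟨c, hc, hL2⟩ := unif_expand hflow hnofix (ε := 1) one_pos
  obtain ⟨ε₀, hε₀, hL1⟩ := unif_small hflow hc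
  refine ⟨ε₀, hε₀, fun x p hp hpT hper => ?_⟩
  obtain ⟨t, ht, htd⟩ := hL2 x
  obtain ⟨r, hr0, hrp, hrt⟩ := per_reduce hflow hp hper t
  have : dist (X r x) x < c := hL1 x r (by rw [abs_of_nonneg hr0]; linarith)
  rw [hrt] at htd
  linarith

end Aux

/-- For fixed-point-free flows, cw-expansiveness is equivalent to the
`orbit-segment` formulation: small continua with bounded reparametrized
diameter are orbit segments `X^I(x_α)` (with `0 ∈ I`, `I` an interval)
inside the ball `B_η(x_α)`. -/
theorem stmt_4 {M : Type*} [MetricSpace M] [CompactSpace M]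
    (X : ℝ → M → M) (hflow : IsFlow X)
    (hnofix : ∀ x : M, ∃ t : ℝ, X t x ≠ x) :
    CwExpansive X ↔
      (∀ η > (0 : ℝ), ∃ δ > (0 : ℝ), ∀ (A : Set M) (α : M → ℝ ≃ₜ ℝ) (xα : M),
        IsCompact A → IsConnected A → xα ∈ A →
        (∀ t : ℝ, α xα t = t) → (∀ a ∈ A, α a 0 = 0) →
        (∀ t : ℝ, ContinuousOn (fun a => α a t) A) →
        (∀ t : ℝ, Metric.diam ((fun a => X (α a t) a) '' A) < δ) →
        (∃ I : Set ℝ, I.OrdConnected ∧ (0 : ℝ) ∈ I ∧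
          A = (fun s => X s xα) '' I) ∧ A ⊆ Metric.ball xα η) := by
  constructor
  · -- forward
    intro hCw η hη
    obtain ⟨T, hT, hTper⟩ := no_small_period hflow hnofix
    obtain ⟨ε₁, hε₁, hL1⟩ := unif_small hflow hη
    set ε : ℝ := min ε₁ (T / 2) with hεdef
    have hε : 0 < ε := lt_min hε₁ (by linarith)
    obtain ⟨δ, hδ, hCw'⟩ := hCw ε hε
    refine ⟨δ, hδ, fun A α xα hA hconn hxα h1 h2 h3 h4 => ?_⟩
    have hsub := hCw' A α xα hA hconn hxα h1 h2 h3 h4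
    set φf : ℝ → M := fun s => X s xα with hφfdef
    have hφc : Continuous φf := hflow.1.comp (continuous_id.prodMk continuous_const)
    -- injectivity on Icc (-ε) ε
    have hinjlt : ∀ s ∈ Set.Icc (-ε) ε, ∀ s' ∈ Set.Icc (-ε) ε, s < s' → φf s ≠ φf s' := by
      intro s hs s' hs' hlt heq
      have hgrp : X (s' - s) (φf s) = φf s' := by
        rw [hφfdef]
        simp only
        rw [← hflow.2.2]
        ring_nf
      rw [← heq] at hgrp
      refine hTper (φf s) (s' - s) (by linarith) ?_ hgrp
      have h2ε : 2 * ε ≤ T := by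
        have := min_le_right ε₁ (T / 2)
        rw [← hεdef] at this
        linarith
      have := hs.1; have := hs'.2
      linarith
    have hinj : ∀ s ∈ Set.Icc (-ε) ε, ∀ s' ∈ Set.Icc (-ε) ε, φf s = φf s' → s = s' := by
      intro s hs s' hs' heq
      rcases lt_trichotomy s s' with h | h | h
      · exact absurd heq (hinjlt s hs s' hs' h)
      · exact h
      · exact absurd heq.symm (hinjlt s' hs' s hs h)
    -- the compact arc
    haveI : CompactSpace (Set.Icc (-ε) ε) := isCompact_iff_compactSpace.mp isCompact_Icc
    set g : Set.Icc (-ε) ε → M := fun s => φf s.1 with hgdef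
    have hgc : Continuous g := hφc.comp continuous_subtype_val
    have hginj : Function.Injective g := fun s s' h => Subtype.ext (hinj s.1 s.2 s'.1 s'.2 h)
    have hemb := hgc.isClosedEmbedding hginj
    set S : Set (Set.Icc (-ε) ε) := g ⁻¹' A with hSdef
    have hrange : A ⊆ Set.range g := by
      intro a ha
      obtain ⟨s, hsIoo, rfl⟩ := hsub ha
      exact ⟨⟨s, Set.Ioo_subset_Icc_self hsIoo⟩, rfl⟩
    have hgS : g '' S = A := by
      rw [hSdef, Set.image_preimage_eq_inter_range, Set.inter_eq_left.mpr hrange]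
    have hSpre : IsPreconnected S := by
      refine hemb.toIsEmbedding.toIsInducing.isPreconnected_image.mp ?_
      rw [hgS]; exact hconn.isPreconnected
    set J : Set ℝ := Subtype.val '' S with hJdef
    have hJpre : IsPreconnected J := hSpre.image _ continuous_subtype_val.continuousOn
    have hJord : J.OrdConnected := hJpre.ordConnected
    refine ⟨⟨J ∩ Set.Ioo (-ε) ε, hJord.inter Set.ordConnected_Ioo, ?_, ?_⟩, ?_⟩
    · constructor
      · refine ⟨⟨0, ⟨by linarith, by linarith⟩⟩, ?_, rfl⟩
        show g _ ∈ A
        rw [hgdef]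
        simpa [hφfdef, hflow.2.1] using hxα
      · exact ⟨by linarith, by linarith⟩
    · apply Set.Subset.antisymm
      · intro a ha
        obtain ⟨s, hsIoo, rfl⟩ := hsub ha
        refine ⟨s, ⟨⟨⟨s, Set.Ioo_subset_Icc_self hsIoo⟩, ha, rfl⟩, hsIoo⟩, rfl⟩
      · rintro a ⟨s, ⟨⟨u, huS, rfl⟩, -⟩, rfl⟩
        exact huS
    · intro a ha
      obtain ⟨s, hsIoo, rfl⟩ := hsub ha
      rw [Metric.mem_ball]
      apply hL1 xα s
      rw [abs_le]
      have h1 := hsIoo.1; have h2 := hsIoo.2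
      have h3 : ε ≤ ε₁ := min_le_left _ _
      constructor <;> linarith
  · -- converse
    intro hRHS ε hε
    obtain ⟨c, hc, hL2⟩ := unif_expand hflow hnofix hε
    obtain ⟨δ, hδ, hR⟩ := hRHS (c / 2) (by positivity)
    refine ⟨δ, hδ, fun A α xα hA hconn hxα h1 h2 h3 h4 => ?_⟩
    obtain ⟨⟨I, hIoc, h0I, hAI⟩, hball⟩ := hR A α xα hA hconn hxα h1 h2 h3 h4
    have hmem : ∀ u ∈ I, dist (X u xα) xα < c / 2 := by
      intro u hu
      have : X u xα ∈ A := hAI ▸ Set.mem_image_of_mem _ hu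
      exact Metric.mem_ball.mp (hball this)
    have hIsub : I ⊆ Set.Ioo (-ε) ε := by
      intro s hs
      by_contra hns
      rw [Set.mem_Ioo, not_and_or, not_lt, not_lt] at hns
      rcases hns with hle | hge
      · -- s ≤ -ε
        have hI' : Set.Icc s 0 ⊆ I := hIoc.out hs h0I
        obtain ⟨t, ht, htd⟩ := hL2 (X (-ε) xα)
        have hXt : X t (X (-ε) xα) = X (t - ε) xα := by
          rw [← hflow.2.2]; ring_nf
        have hm1 : (t - ε) ∈ I := hI' ⟨by linarith [ht.1], by linarith [ht.2]⟩
        have hm2 : (-ε : ℝ) ∈ I := hI' ⟨by linarith, by linarith⟩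
        have d1 := hmem _ hm1
        have d2 := hmem _ hm2
        rw [hXt] at htd
        have htri : dist (X (t - ε) xα) (X (-ε) xα) ≤
            dist (X (t - ε) xα) xα + dist (X (-ε) xα) xα := dist_triangle_right _ _ _
        linarith
      · -- ε ≤ s
        have hI' : Set.Icc 0 s ⊆ I := hIoc.out h0I hs
        obtain ⟨t, ht, htd⟩ := hL2 xα
        have hm : t ∈ I := hI' ⟨ht.1, by linarith [ht.2]⟩
        have := hmem _ hm
        linarith
    rw [hAI]
    exact Set.image_mono hIsub
end

section
/- Let X^t be a flow without fixed points on a compact metric space. If for every ε > 0 there is δ > 0 such that every continuum A with a 'discrete reparametrization' β ∈ SQ*(A) satisfying β(x_β)_{i+1} − β(x_β)_i ≤ η, sup_{a∈A} |β(a)_{i+1} − β(a)_i| ≤ δ, and diam(X^i_β(A)) < δ for all i ∈ ℤ must satisfy A ⊆ X^{(-ε,ε)}(x_β), then X^t is cw-expansive (i.e., the continuous-reparametrization definition holds). -/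
open Filter


/-- A point between two others moves less under a monotone-or-antitone map. -/
lemma between_abs {f : ℝ → ℝ} (hf : StrictMono f ∨ StrictAnti f)
    {p q q' p' : ℝ} (h1 : p ≤ q) (h2 : q ≤ q') (h3 : q' ≤ p') :
    |f q' - f q| ≤ |f p' - f p| := by
  rcases hf with h | h
  · have a1 := h.monotone h1
    have a2 := h.monotone h2
    have a3 := h.monotone h3
    rw [abs_of_nonneg (by linarith), abs_of_nonneg (by linarith)]
    linarith
  · have a1 := h.antitone h1
    have a2 := h.antitone h2
    have a3 := h.antitone h3
    rw [abs_of_nonpos (by linarith), abs_of_nonpos (by linarith)]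
    linarith

/-- Dini-type uniform smallness: for a compact family of monotone continuous maps,
at each time `t` there is a uniform symmetric window of small variation. -/
lemma dini_window {M : Type*} [MetricSpace M] {A : Set M} (hA : IsCompact A)
    {F : M → ℝ → ℝ}
    (hFc : ∀ a ∈ A, Continuous (F a))
    (hFm : ∀ a ∈ A, StrictMono (F a) ∨ StrictAnti (F a))
    (hcont : ∀ t : ℝ, ContinuousOn (fun a => F a t) A)
    {δ η : ℝ} (hδ : 0 < δ) (hη : 0 < η) (t : ℝ) :
    ∃ r, 0 < r ∧ r ≤ η ∧ ∀ a ∈ A, |F a (t + r) - F a (t - r)| ≤ δ := by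
  by_contra hcontra
  push_neg at hcontra
  set r : ℕ → ℝ := fun n => η / (n + 1) with hr
  have hrpos : ∀ n, 0 < r n := fun n => by positivity
  have hrle : ∀ n, r n ≤ η := by
    intro n
    rw [hr]
    rw [div_le_iff₀ (by positivity)]
    nlinarith [hη.le, (Nat.cast_nonneg n : (0:ℝ) ≤ n)]
  have hrmono : ∀ {m n : ℕ}, m ≤ n → r n ≤ r m := by
    intro m n hmn
    apply div_le_div_of_nonneg_left hη.le (by positivity)
    exact_mod_cast by exact_mod_cast add_le_add_left (Nat.cast_le.mpr hmn) 1
  choose a haA hagt using fun n => hcontra (r n) (hrpos n) (hrle n)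
  obtain ⟨b, hbA, φ, hφ, hconv⟩ := hA.tendsto_subseq haA
  have key : ∀ m : ℕ, δ ≤ |F b (t + r m) - F b (t - r m)| := by
    intro m
    have hcΦ : Tendsto (fun k => a (φ k)) atTop (nhdsWithin b A) :=
      tendsto_nhdsWithin_iff.mpr ⟨hconv, Filter.Eventually.of_forall fun k => haA (φ k)⟩
    have hcc : ContinuousWithinAt (fun x => |F x (t + r m) - F x (t - r m)|) A b :=
      (((hcont (t + r m)).sub (hcont (t - r m))).abs).continuousWithinAt hbA
    refine ge_of_tendsto (hcc.tendsto.comp hcΦ) ?_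
    filter_upwards [eventually_ge_atTop m] with k hk
    have hkm : m ≤ φ k := hk.trans (hφ.le_apply)
    have h1 : r (φ k) ≤ r m := hrmono hkm
    have hin : |F (a (φ k)) (t + r (φ k)) - F (a (φ k)) (t - r (φ k))|
        ≤ |F (a (φ k)) (t + r m) - F (a (φ k)) (t - r m)| := by
      apply between_abs (hFm _ (haA (φ k))) <;> linarith [hrpos (φ k), hrpos m]
    exact le_trans (hagt (φ k)).le hin
  have hr0 : Tendsto r atTop (nhds 0) := by
    apply Tendsto.div_atTop tendsto_const_nhds
    exact tendsto_atTop_add_const_right _ 1 tendsto_natCast_atTop_atTop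
  have hlim : Tendsto (fun m => |F b (t + r m) - F b (t - r m)|) atTop (nhds 0) := by
    have h1 : Tendsto (fun m => F b (t + r m)) atTop (nhds (F b t)) := by
      apply ((hFc b hbA).tendsto t).comp
      simpa using (tendsto_const_nhds.add hr0 : Tendsto (fun m => t + r m) atTop (nhds (t + 0)))
    have h2 : Tendsto (fun m => F b (t - r m)) atTop (nhds (F b t)) := by
      apply ((hFc b hbA).tendsto t).comp
      simpa using (tendsto_const_nhds.sub hr0 : Tendsto (fun m => t - r m) atTop (nhds (t - 0)))
    simpa using (h1.sub h2).abs
  have : δ ≤ 0 := ge_of_tendsto hlim (Filter.Eventually.of_forall key)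
  linarith


lemma sampling_seq {M : Type*} [MetricSpace M] {A : Set M} (hA : IsCompact A)
    {F : M → ℝ → ℝ}
    (hFc : ∀ a ∈ A, Continuous (F a))
    (hFm : ∀ a ∈ A, StrictMono (F a) ∨ StrictAnti (F a))
    (hcont : ∀ t : ℝ, ContinuousOn (fun a => F a t) A)
    {δ η : ℝ} (hδ : 0 < δ) (hη : 0 < η) :
    ∃ u : ℕ → ℝ, u 0 = 0 ∧
      (∀ n, 0 ≤ u (n + 1) - u n) ∧ (∀ n, u (n + 1) - u n ≤ η) ∧
      (∀ n, ∀ a ∈ A, |F a (u (n + 1)) - F a (u n)| ≤ δ) ∧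
      Tendsto u atTop atTop := by
  set S : ℝ → Set ℝ := fun t => {s | 0 ≤ s ∧ s ≤ η ∧ ∀ a ∈ A, |F a (t + s) - F a t| ≤ δ}
    with hS
  have hS0 : ∀ t, (0 : ℝ) ∈ S t := fun t => ⟨le_refl 0, hη.le, fun a ha => by simp [hδ.le]⟩
  have hSsub : ∀ t, S t ⊆ Set.Icc 0 η := fun t s hs => ⟨hs.1, hs.2.1⟩
  have hScpt : ∀ t, IsCompact (S t) := by
    intro t
    have heq : S t = Set.Icc 0 η ∩ ⋂ a ∈ A, {s | |F a (t + s) - F a t| ≤ δ} := by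
      ext s
      simp only [hS, Set.mem_setOf_eq, Set.mem_inter_iff, Set.mem_Icc, Set.mem_iInter, and_assoc]
    have hclosed : IsClosed (S t) := by
      rw [heq]
      refine isClosed_Icc.inter (isClosed_biInter fun a ha => ?_)
      exact isClosed_le ((((hFc a ha).comp (continuous_const.add continuous_id)).sub
        continuous_const).abs) continuous_const
    exact isCompact_Icc.of_isClosed_subset hclosed (hSsub t)
  have hmem : ∀ t, sSup (S t) ∈ S t := fun t => (hScpt t).sSup_mem ⟨0, hS0 t⟩
  have hle : ∀ t, ∀ s ∈ S t, s ≤ sSup (S t) := fun t s hs =>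
    le_csSup ((hScpt t).bddAbove) hs
  -- define the sequence
  set u : ℕ → ℝ := fun n => Nat.rec (motive := fun _ => ℝ) 0
    (fun _ un => un + sSup (S un)) n with hu
  have hu0 : u 0 = 0 := rfl
  have husucc : ∀ n, u (n + 1) = u n + sSup (S (u n)) := fun n => rfl
  have hstep0 : ∀ n, 0 ≤ u (n + 1) - u n := by
    intro n; rw [husucc]; have := (hmem (u n)).1; linarith
  have hstepη : ∀ n, u (n + 1) - u n ≤ η := by
    intro n; rw [husucc]; have := (hmem (u n)).2.1; linarith
  have hstepδ : ∀ n, ∀ a ∈ A, |F a (u (n + 1)) - F a (u n)| ≤ δ := by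
    intro n a ha
    have h := (hmem (u n)).2.2 a ha
    rw [husucc]
    simpa [add_comm] using h
  have hmono : Monotone u := monotone_nat_of_le_succ fun n => by linarith [hstep0 n]
  refine ⟨u, hu0, hstep0, hstepη, hstepδ, ?_⟩
  rcases tendsto_of_monotone hmono with htop | ⟨l, hl⟩
  · exact htop
  exfalso
  have hub : ∀ n, u n ≤ l := fun n => hmono.ge_of_tendsto hl n
  obtain ⟨r, hr0, hrη, hrδ⟩ := dini_window hA hFc hFm hcont hδ hη l
  have hev : ∀ᶠ n in atTop, l - min r η < u n := by
    have : l - min r η < l := by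
      have := lt_min hr0 hη; linarith
    exact hl.eventually (eventually_gt_nhds this)
  obtain ⟨n, hn⟩ := hev.exists
  set s' := min η (l + r - u n) with hs'
  have hs'mem : s' ∈ S (u n) := by
    have h1 : l - r ≤ u n := by
      have := min_le_left r η; linarith
    refine ⟨?_, min_le_left _ _, ?_⟩
    · have : 0 ≤ l + r - u n := by linarith [hub n]
      exact le_min hη.le this
    · intro a ha
      have hq3 : u n + s' ≤ l + r := by
        have := min_le_right η (l + r - u n); linarith
      have := between_abs (hFm a ha) (p := l - r) (q := u n) (q' := u n + s') (p' := l + r)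
        h1 (by have : 0 ≤ s' := le_min hη.le (by linarith [hub n]); linarith) hq3
      calc |F a (u n + s') - F a (u n)| ≤ |F a (l + r) - F a (l - r)| := this
        _ ≤ δ := hrδ a ha
  have hgt : l < u (n + 1) := by
    have h1 : s' ≤ sSup (S (u n)) := hle _ _ hs'mem
    have h2 : l - u n < s' := by
      have hminη : l - u n < η := by have := min_le_right r η; linarith
      have hminr : l - u n < l + r - u n := by linarith
      exact lt_min hminη hminr
    rw [husucc]; linarith
  exact absurd (hub (n + 1)) (not_le.mpr hgt)


set_option maxHeartbeats 1000000 in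
/-- Discrete reparametrizations (`SQ*`) criterion implies cw-expansiveness:
if for every `ε > 0` there are `δ, η > 0` such that every continuum `A` with a
discrete reparametrization `β ∈ SQ*(A)` (guide increments `≤ η`, all
increments `≤ δ` in absolute value) whose discrete images have diameter `< δ`
is contained in `X^{(-ε,ε)}(x_β)`, then the flow is cw-expansive. -/
theorem stmt_18 {M : Type*} [MetricSpace M] [CompactSpace M]
    (X : ℝ → M → M) (hflow : IsFlow X)
    (hnofix : ∀ x : M, ∃ t : ℝ, X t x ≠ x)
    (hdisc : ∀ ε > (0 : ℝ), ∃ δ > (0 : ℝ), ∃ η > (0 : ℝ),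
      ∀ (A : Set M) (β : M → ℤ → ℝ) (xβ : M),
        IsCompact A → IsConnected A → xβ ∈ A →
        (∀ a ∈ A, β a 0 = 0) →
        (∀ i : ℤ, ContinuousOn (fun a => β a i) A) →
        Filter.Tendsto (β xβ) Filter.atTop Filter.atTop →
        Filter.Tendsto (β xβ) Filter.atBot Filter.atBot →
        (∀ i : ℤ, β xβ (i + 1) - β xβ i ≤ η) →
        (∀ i : ℤ, ∀ a ∈ A, |β a (i + 1) - β a i| ≤ δ) →
        (∀ i : ℤ, Metric.diam ((fun a => X (β a i) a) '' A) < δ) →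
        A ⊆ (fun s => X s xβ) '' Set.Ioo (-ε) ε) :
    CwExpansive X := by
  intro ε hε
  obtain ⟨δ, hδ, η, hη, H⟩ := hdisc ε hε
  refine ⟨δ, hδ, ?_⟩
  intro A α xα hAc hAconn hxA hguide h0 hcont hdiam
  -- the two families (forward and backward time)
  have hFc : ∀ a ∈ A, Continuous (fun t => α a t) := fun a _ => (α a).continuous
  have hFm : ∀ a ∈ A, StrictMono (fun t => α a t) ∨ StrictAnti (fun t => α a t) :=
    fun a _ => (α a).continuous.strictMono_of_inj (α a).injective
  have hGc : ∀ a ∈ A, Continuous (fun t => α a (-t)) :=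
    fun a ha => (hFc a ha).comp continuous_neg
  have hGm : ∀ a ∈ A, StrictMono (fun t => α a (-t)) ∨ StrictAnti (fun t => α a (-t)) := by
    intro a ha
    have hneg : StrictAnti (fun t : ℝ => -t) := fun x y h => by simpa using h
    rcases hFm a ha with h | h
    · exact Or.inr (h.comp_strictAnti hneg)
    · exact Or.inl (h.comp hneg)
  obtain ⟨u, hu0, hu1, hu2, hu3, hutop⟩ :=
    sampling_seq hAc hFc hFm hcont hδ hη
  obtain ⟨w, hw0, hw1, hw2, hw3, hwtop⟩ :=
    sampling_seq hAc hGc hGm (fun t => hcont (-t)) hδ hη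
  -- sampling times
  set T : ℤ → ℝ := fun i => if 0 ≤ i then u i.toNat else -w (-i).toNat with hT
  have hTpos : ∀ i : ℤ, 0 ≤ i → T i = u i.toNat := fun i hi => if_pos hi
  have hTneg : ∀ i : ℤ, i ≤ 0 → T i = -w (-i).toNat := by
    intro i hi
    rcases eq_or_lt_of_le hi with h | h
    · subst h; simp [hT, hu0, hw0]
    · exact if_neg (by omega)
  set β : M → ℤ → ℝ := fun a i => α a (T i) with hβ
  -- increments of times correspond to the sequences
  have hguideβ : β xα = T := funext fun i => hguide (T i)
  -- apply the discrete hypothesis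
  refine H A β xα hAc hAconn hxA ?_ ?_ ?_ ?_ ?_ ?_ ?_
  · -- β a 0 = 0
    intro a ha
    have : T 0 = 0 := by rw [hTpos 0 le_rfl]; exact hu0
    simp only [hβ, this]
    exact h0 a ha
  · exact fun i => hcont (T i)
  · -- atTop
    rw [hguideβ]
    have h1 : Tendsto (fun i : ℤ => i.toNat) atTop atTop := by
      refine tendsto_atTop_atTop.2 fun b => ⟨(b : ℤ), fun i hi => ?_⟩
      show b ≤ i.toNat
      omega
    refine Tendsto.congr' ?_ (hutop.comp h1)
    filter_upwards [eventually_ge_atTop (0 : ℤ)] with i hi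
    exact (hTpos i hi).symm
  · -- atBot
    rw [hguideβ]
    have h1 : Tendsto (fun i : ℤ => (-i).toNat) atBot atTop := by
      refine tendsto_atBot_atTop.2 fun b => ⟨-(b : ℤ), fun i hi => ?_⟩
      show b ≤ (-i).toNat
      omega
    have h2 : Tendsto (fun i : ℤ => -w (-i).toNat) atBot atBot :=
      tendsto_neg_atTop_atBot.comp (hwtop.comp h1)
    refine Tendsto.congr' ?_ h2
    filter_upwards [eventually_le_atBot (0 : ℤ)] with i hi
    exact (hTneg i hi).symm
  · -- guide increments ≤ η
    intro i
    rw [hguideβ]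
    rcases le_or_gt 0 i with hi | hi
    · rw [hTpos i hi, hTpos (i + 1) (by omega)]
      have hnat : (i + 1).toNat = i.toNat + 1 := by omega
      rw [hnat]
      exact hu2 i.toNat
    · have hi1 : i + 1 ≤ 0 := by omega
      rw [hTneg i hi.le, hTneg (i + 1) hi1]
      have hnat : (-i).toNat = (-(i + 1)).toNat + 1 := by omega
      rw [hnat]
      have := hw2 (-(i + 1)).toNat
      linarith
  · -- all increments ≤ δ in absolute value
    intro i a ha
    simp only [hβ]
    rcases le_or_gt 0 i with hi | hi
    · rw [hTpos i hi, hTpos (i + 1) (by omega)]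
      have hnat : (i + 1).toNat = i.toNat + 1 := by omega
      rw [hnat]
      exact hu3 i.toNat a ha
    · have hi1 : i + 1 ≤ 0 := by omega
      rw [hTneg i hi.le, hTneg (i + 1) hi1]
      have hnat : (-i).toNat = (-(i + 1)).toNat + 1 := by omega
      rw [hnat]
      have := hw3 (-(i + 1)).toNat a ha
      rw [abs_sub_comm] at this
      exact this
  · -- diameters
    exact fun i => hdiam (T i)
end
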